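/- arXiv:1011.3559 — 2 statements merged into one kernel-verified Lean document; each statement's English description precedes it below -/
import Mathlib

section
/- Let $P$ be a finite $p$-group with subgroup $Q$. If $P$ has nilpotency class 2, or $C_P(Q)$ is normal in $P$, or $C_P(Q) \leq Q$, then $J(kC)\,I = I\,J(kC)$, where $kP^Q = kC \ltimes I$ and $C = C_P(Q)$. -/
set_option synthInstance.maxHeartbeats 1000000
set_option maxHeartbeats 1000000

open MonoidAlgebra Finset
open scoped Classical

/-- The centralizer algebra `kP^Q`: the subalgebra of the group algebra `kP`
fixed by the conjugation action of the subgroup `Q`. -/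
noncomputable def centAlg (k : Type*) [Field k] {P : Type*} [Group P] (Q : Subgroup P) :
    Subalgebra k (MonoidAlgebra k P) :=
  ⨅ q ∈ Q, AlgHom.equalizer
    (MonoidAlgebra.domCongr k k (MulAut.conj q : P ≃* P)).toAlgHom (AlgHom.id k _)

/-- The augmentation map `kP → k`. -/
noncomputable def aug (k : Type*) [Field k] (P : Type*) [Group P] :
    MonoidAlgebra k P →ₐ[k] k := MonoidAlgebra.lift k k P 1

/-- The Jacobson radical of a `k`-algebra, as a `k`-submodule. -/
noncomputable def jacRad (k : Type*) [Field k] (A : Type*) [Ring A] [Algebra k A] :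
    Submodule k A :=
  Submodule.restrictScalars k ((⊥ : Ideal A).jacobson)

/-- The Loewy length: the least `d` with `J^d = 0`. -/
noncomputable def llen (k : Type*) [Field k] (A : Type*) [Ring A] [Algebra k A] : ℕ :=
  sInf {d | jacRad k A ^ d = ⊥}

/-- The `Q`-conjugation orbit sum `κ_x ∈ kP`. -/
noncomputable def kappa {k : Type*} [Field k] {P : Type*} [Group P] [Fintype P]
    (Q : Subgroup P) (x : P) : MonoidAlgebra k P :=
  ∑ y ∈ Finset.univ.filter (fun y => ∃ q ∈ Q, q * x * q⁻¹ = y), MonoidAlgebra.single y 1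

/-- The span `I` of the orbit sums `κ_x`, `x ∉ C_P(Q)`. -/
noncomputable def idealI (k : Type*) [Field k] {P : Type*} [Group P] [Fintype P]
    (Q : Subgroup P) : Submodule k (MonoidAlgebra k P) :=
  Submodule.span k
    {f | ∃ x ∉ Subgroup.centralizer (Q : Set P), f = kappa Q x}

/-- The span of `C_P(Q)` inside `kP`, i.e. the subalgebra `kC_P(Q)`. -/
noncomputable def subC (k : Type*) [Field k] {P : Type*} [Group P]
    (Q : Subgroup P) : Submodule k (MonoidAlgebra k P) :=
  Submodule.span k
    {f | ∃ c ∈ Subgroup.centralizer (Q : Set P), f = MonoidAlgebra.single c (1 : k)}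

/-- The radical `J' = J(kC_P(Q))`, i.e. the augmentation-trivial part of `kC_P(Q)`. -/
noncomputable def jacC (k : Type*) [Field k] {P : Type*} [Group P]
    (Q : Subgroup P) : Submodule k (MonoidAlgebra k P) :=
  subC k Q ⊓ LinearMap.ker (aug k P).toLinearMap

/-!
Write `C = C_P(Q)`. Both products are spanned by the products of the generators `c - 1`
(`c ∈ C`) of `J(kC)` with the generators `κ_x` (`x ∉ C`) of `I`. As `c` commutes with `Q`,
`(c - 1) κ_x = κ_{cx} - κ_x` and `κ_x (c - 1) = κ_{xc} - κ_x`, so `J(kC) I ≤ I J(kC)` as soon as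
every `cx` is `Q`-conjugate to some `xc'` with `c' ∈ C`; inverting both sides of such a
conjugation gives the reverse inclusion. If `C` is normal take `c' = x⁻¹cx`, and if `C ≤ Q`
conjugate `cx` by `c⁻¹`. In class 2 the commutator subgroup is central, hence lies in `C`, so
`C` is normal.
-/

section GroupTheory

variable {G : Type*} [Group G]

theorem commutator_le_center_of_nilpotencyClass_le_two [Group.IsNilpotent G]
    (h : Group.nilpotencyClass G ≤ 2) : commutator G ≤ Subgroup.center G := by
  have htop : Subgroup.upperCentralSeries G (1 + 1) = ⊤ :=
    Subgroup.upperCentralSeries_eq_top_iff_nilpotencyClass_le.mpr h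
  rw [_root_.commutator_def, Subgroup.commutator_le]
  intro g _ g' _
  rw [← Subgroup.upperCentralSeries_one]
  exact Subgroup.mem_upperCentralSeries_succ_iff.mp (htop ▸ Subgroup.mem_top g) g'

theorem centralizer_normal_of_nilpotencyClass_le_two [Group.IsNilpotent G]
    (h : Group.nilpotencyClass G ≤ 2) (S : Set G) : (Subgroup.centralizer S).Normal :=
  .of_commutator_le G <|
    (commutator_le_center_of_nilpotencyClass_le_two h).trans (Subgroup.center_le_centralizer S)

def CentralizerCommutesUpToConj (Q : Subgroup G) : Prop :=
  ∀ c ∈ Subgroup.centralizer (Q : Set G), ∀ x : G,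
    ∃ q ∈ Q, ∃ c' ∈ Subgroup.centralizer (Q : Set G), q * (c * x) * q⁻¹ = x * c'

namespace CentralizerCommutesUpToConj

variable {Q : Subgroup G}

theorem of_normal (hN : (Subgroup.centralizer (Q : Set G)).Normal) :
    CentralizerCommutesUpToConj Q := fun c hc x =>
  ⟨1, Q.one_mem, x⁻¹ * c * x, by simpa using hN.conj_mem c hc x⁻¹, by group⟩

theorem of_centralizer_le (hle : Subgroup.centralizer (Q : Set G) ≤ Q) :
    CentralizerCommutesUpToConj Q := fun c hc x =>
  ⟨c⁻¹, Q.inv_mem (hle hc), c, hc, by group⟩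

theorem exists_conj_mul_eq (H : CentralizerCommutesUpToConj Q)
    {c : G} (hc : c ∈ Subgroup.centralizer (Q : Set G)) (x : G) :
    ∃ q ∈ Q, ∃ c' ∈ Subgroup.centralizer (Q : Set G), q * (x * c) * q⁻¹ = c' * x := by
  obtain ⟨q, hq, c', hc', hconj⟩ := H c⁻¹ (inv_mem hc) x⁻¹
  refine ⟨q, hq, c'⁻¹, inv_mem hc', ?_⟩
  simpa [mul_assoc] using congrArg (·⁻¹) hconj

end CentralizerCommutesUpToConj

end GroupTheory

section OrbitSums

variable {k : Type*} [Field k] {P : Type*} [Group P] [Fintype P] {Q : Subgroup P}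

theorem kappa_conj {a : P} (ha : a ∈ Q) (x : P) :
    (kappa Q (a * x * a⁻¹) : MonoidAlgebra k P) = kappa Q x := by
  unfold kappa
  congr 1
  refine Finset.filter_congr fun y _ => ⟨?_, ?_⟩
  · rintro ⟨q, hq, rfl⟩
    exact ⟨q * a, Q.mul_mem hq ha, by group⟩
  · rintro ⟨q, hq, rfl⟩
    exact ⟨q * a⁻¹, Q.mul_mem hq (Q.inv_mem ha), by group⟩

theorem single_mul_kappa {c : P} (hc : c ∈ Subgroup.centralizer (Q : Set P)) (x : P) :
    single c (1 : k) * kappa Q x = kappa Q (c * x) := by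
  have hconj (q : P) (hq : q ∈ Q) : q * (c * x) * q⁻¹ = c * (q * x * q⁻¹) := by
    rw [← mul_assoc, Subgroup.mem_centralizer_iff.mp hc q hq]; simp only [mul_assoc]
  rw [kappa, kappa, Finset.mul_sum]
  refine Finset.sum_equiv (Equiv.mulLeft c) (fun y => ?_) (fun y _ => by simp [single_mul_single])
  simp only [mem_filter, mem_univ, true_and, Equiv.coe_mulLeft]
  exact exists_congr fun q => and_congr_right fun hq => by rw [hconj q hq, mul_right_inj]

theorem kappa_mul_single {c : P} (hc : c ∈ Subgroup.centralizer (Q : Set P)) (x : P) :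
    kappa Q x * single c (1 : k) = kappa Q (x * c) := by
  have hconj (q : P) (hq : q ∈ Q) : q * (x * c) * q⁻¹ = q * x * q⁻¹ * c := by
    rw [mul_assoc, mul_assoc, (Subgroup.mem_centralizer_iff.mp hc q⁻¹ (Q.inv_mem hq)).symm]
    simp only [mul_assoc]
  rw [kappa, kappa, Finset.sum_mul]
  refine Finset.sum_equiv (Equiv.mulRight c) (fun y => ?_) (fun y _ => by simp [single_mul_single])
  simp only [mem_filter, mem_univ, true_and, Equiv.coe_mulRight]
  exact exists_congr fun q => and_congr_right fun hq => by rw [hconj q hq, mul_left_inj]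

end OrbitSums

section Radical

variable {k : Type*} [Field k] {P : Type*} [Group P] {Q : Subgroup P}

theorem jacC_eq_span : jacC k Q = Submodule.span k
    ((fun c => single c (1 : k) - 1) '' (Subgroup.centralizer (Q : Set P) : Set P)) := by
  refine le_antisymm ?_ ?_
  · rintro f ⟨hf, hker⟩
    -- `g ↦ g - aug g • 1` fixes `f` and sends each spanning element `c` of `kC` to `c - 1`
    let φ : MonoidAlgebra k P →ₗ[k] MonoidAlgebra k P :=
      LinearMap.id - (aug k P).toLinearMap.smulRight 1
    have hφf : φ f = f := by simp [φ, LinearMap.mem_ker.mp hker]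
    rw [← hφf]
    refine (Submodule.map_span_le φ _ _).mpr ?_ (Submodule.mem_map_of_mem hf)
    rintro _ ⟨c, hc, rfl⟩
    exact Submodule.subset_span ⟨c, hc, by simp [φ, aug]⟩
  · rw [Submodule.span_le]
    rintro _ ⟨c, hc, rfl⟩
    exact ⟨sub_mem (Submodule.subset_span ⟨c, hc, rfl⟩)
      (Submodule.subset_span ⟨1, one_mem _, rfl⟩), by simp [aug]⟩

end Radical

section Commutation

variable {k : Type*} [Field k] {P : Type*} [Group P] [Fintype P] {Q : Subgroup P}

theorem single_sub_one_mul_kappa {c : P} (hc : c ∈ Subgroup.centralizer (Q : Set P)) (x : P) :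
    (single c (1 : k) - 1) * kappa Q x = kappa Q (c * x) - kappa Q x := by
  rw [sub_mul, one_mul, single_mul_kappa hc]

theorem kappa_mul_single_sub_one {c : P} (hc : c ∈ Subgroup.centralizer (Q : Set P)) (x : P) :
    kappa Q x * (single c (1 : k) - 1) = kappa Q (x * c) - kappa Q x := by
  rw [mul_sub, mul_one, kappa_mul_single hc]

theorem jacC_mul_idealI_le (H : CentralizerCommutesUpToConj Q) :
    jacC k Q * idealI k Q ≤ idealI k Q * jacC k Q := by
  rw [jacC_eq_span, idealI, Submodule.span_mul_span, Submodule.span_mul_span]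
  refine Submodule.span_mono ?_
  rintro _ ⟨_, ⟨c, hc, rfl⟩, _, ⟨x, hx, rfl⟩, rfl⟩
  obtain ⟨q, hq, c', hc', hconj⟩ := H c hc x
  refine ⟨kappa Q x, ⟨x, hx, rfl⟩, single c' 1 - 1, ⟨c', hc', rfl⟩, ?_⟩
  dsimp only
  rw [single_sub_one_mul_kappa hc, kappa_mul_single_sub_one hc', ← kappa_conj hq (c * x), hconj]

theorem idealI_mul_jacC_le (H : CentralizerCommutesUpToConj Q) :
    idealI k Q * jacC k Q ≤ jacC k Q * idealI k Q := by
  rw [jacC_eq_span, idealI, Submodule.span_mul_span, Submodule.span_mul_span]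
  refine Submodule.span_mono ?_
  rintro _ ⟨_, ⟨x, hx, rfl⟩, _, ⟨c, hc, rfl⟩, rfl⟩
  obtain ⟨q, hq, c', hc', hconj⟩ := H.exists_conj_mul_eq hc x
  refine ⟨single c' 1 - 1, ⟨c', hc', rfl⟩, kappa Q x, ⟨x, hx, rfl⟩, ?_⟩
  dsimp only
  rw [single_sub_one_mul_kappa hc', kappa_mul_single_sub_one hc, ← kappa_conj hq (x * c), hconj]

end Commutation

theorem stmt_6_general (k : Type*) [Field k]
    (P : Type*) [Group P] [Fintype P] [Group.IsNilpotent P]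
    (Q : Subgroup P)
    (h : Group.nilpotencyClass P = 2 ∨ (Subgroup.centralizer (Q : Set P)).Normal ∨
      Subgroup.centralizer (Q : Set P) ≤ Q) :
    jacC k Q * idealI k Q = idealI k Q * jacC k Q := by
  have H : CentralizerCommutesUpToConj Q := by
    rcases h with hclass | hnormal | hle
    · exact .of_normal (centralizer_normal_of_nilpotencyClass_le_two hclass.le _)
    · exact .of_normal hnormal
    · exact .of_centralizer_le hle
  exact le_antisymm (jacC_mul_idealI_le H) (idealI_mul_jacC_le H)

theorem stmt_6 {p : ℕ} [Fact p.Prime] (k : Type*) [Field k] [CharP k p]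
    (P : Type*) [Group P] [Fintype P] [Group.IsNilpotent P]
    (hP : IsPGroup p P) (Q : Subgroup P)
    (h : Group.nilpotencyClass P = 2 ∨ (Subgroup.centralizer (Q : Set P)).Normal ∨
      Subgroup.centralizer (Q : Set P) ≤ Q) :
    jacC k Q * idealI k Q = idealI k Q * jacC k Q :=
  stmt_6_general k P Q h
end

section
/- Let $a$ generate a cyclic group of order $2^{n-1} \geq 4$, let $l = 2^{n-2}$, $z = a^l$, and let $k$ be a field of characteristic 2. Let $\psi$ be the algebra automorphism of $k\langle a\rangle$ induced by $a \mapsto a^{-1}$ (the case $s=0$), and let $\Lambda$ be the fixed subalgebra. Setting $\eta_i = a^i + a^{-i}$, the set $\{1, z, \eta_1, \ldots, \eta_{2l-1}\}$ spans $\Lambda$, $J(\Lambda)^l = 0$, and $a + a^3 + a^5 + \cdots + a^{2l-1} \in J(\Lambda)^{l-1} \setminus \{0\}$. -/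
set_option synthInstance.maxHeartbeats 1000000
set_option maxHeartbeats 1000000

open MonoidAlgebra Finset
open scoped Classical

/-! Put `t = a`, `s = a⁻¹` in `k⟨a⟩`, so that `η₁ = t + s = s (1 + t)²` and, in characteristic 2,
`(1 + t)^(2l) = 1 + t^(2l) = 0`.

An element of a group algebra fixed by inversion is a combination of self-inverse group elements
and of orbit sums `g + g⁻¹`; in a cyclic group of order `2l` the self-inverse elements are `1` and
`z`. Each of `z - 1` and `g + g⁻¹` is divisible by `(1 + t)²`, and `J(Λ)` lies in the kernel of the
augmentation, so `J(Λ)` lies in the ideal generated by `(1 + t)²`, whose `l`-th power is generated by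
`(1 + t)^(2l) = 0`. Finally `η₁` is nilpotent, hence in `J(Λ)`, and
`η₁^(l-1) = s^(l-1) (1 + t)^(2l-2)` agrees with `t (1 + t²)^(l-1) = ∑ t^(2i+1)`: multiplied by `t^(l-1)`
their difference is `(1 + t)^(3l-2) = 0`, as `l ≥ 2`.
-/

section CharTwoRing

variable {R : Type*} [CommRing R] [CharP R 2]

theorem one_add_pow_two_pow_sub_one (m : ℕ) (x : R) :
    (1 + x) ^ (2 ^ m - 1) = ∑ i ∈ range (2 ^ m), x ^ i := by
  induction m with
  | zero => simp
  | succ m ih =>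
    have hsplit : 2 ^ (m + 1) - 1 = 2 ^ m + (2 ^ m - 1) := by
      have := Nat.one_le_two_pow (n := m); omega
    rw [hsplit, pow_add, add_pow_char_pow, one_pow, ih, pow_succ, mul_two, sum_range_add,
      add_mul, one_mul, mul_sum]
    simp only [← pow_add]

variable {t s : R}

theorem add_eq_mul_one_add_sq (hts : t * s = 1) : t + s = s * (1 + t) ^ 2 := by
  linear_combination (-t) * hts - t * s * CharTwo.two_eq_zero (R := R)

theorem one_add_sq_dvd_pow_add_pow (hts : t * s = 1) (i : ℕ) : (1 + t) ^ 2 ∣ t ^ i + s ^ i := by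
  have hsq : (1 + t) ^ 2 = 1 - t ^ 2 := by
    linear_combination (t + t ^ 2) * CharTwo.two_eq_zero (R := R)
  have hts_pow : (t * s) ^ i = 1 := by rw [hts, one_pow]
  have hfactor : t ^ i + s ^ i = s ^ i * (1 - (t ^ 2) ^ i) := by
    linear_combination t ^ i * hts_pow + t ^ i * CharTwo.two_eq_zero (R := R)
  rw [hfactor, hsq]
  exact (one_sub_dvd_one_sub_pow _ _).mul_left _

variable {m : ℕ}

theorem one_add_pow_eq_zero (ht : t ^ (2 * 2 ^ m) = 1) : (1 + t) ^ (2 * 2 ^ m) = 0 := by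
  rw [← pow_succ', add_pow_char_pow, one_pow, pow_succ', ht]
  exact CharTwo.add_self_eq_zero 1

theorem add_pow_eq_zero (hts : t * s = 1) (ht : t ^ (2 * 2 ^ m) = 1) : (t + s) ^ 2 ^ m = 0 := by
  rw [add_eq_mul_one_add_sq hts, mul_pow, ← pow_mul, one_add_pow_eq_zero ht, mul_zero]

theorem add_pow_pred_eq_sum (hts : t * s = 1) (ht : t ^ (2 * 2 ^ m) = 1) (hm : 1 ≤ m) :
    (t + s) ^ (2 ^ m - 1) = ∑ i ∈ range (2 ^ m), t ^ (2 * i + 1) := by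
  have hl : 2 ≤ 2 ^ m := by simpa using Nat.pow_le_pow_right two_pos hm
  obtain ⟨j, hj⟩ : ∃ j, 2 ^ m = j + 1 := ⟨2 ^ m - 1, by omega⟩
  have hsum : ∑ i ∈ range (2 ^ m), t ^ (2 * i + 1) = t * (1 + t) ^ (2 * j) := by
    rw [pow_mul, add_pow_char, one_pow, show j = 2 ^ m - 1 by omega, one_add_pow_two_pow_sub_one,
      mul_sum]
    simp only [pow_succ', pow_mul]
  have hvanish : (1 + t ^ (j + 1)) * (1 + t) ^ (2 * j) = 0 := by
    rw [← hj, ← one_pow (2 ^ m), ← add_pow_char_pow, one_pow, ← pow_add,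
      show 2 ^ m + 2 * j = 2 * 2 ^ m + (j - 1) by omega, pow_add, one_add_pow_eq_zero ht,
      zero_mul]
  have hts_pow : (t * s) ^ j = 1 := by rw [hts, one_pow]
  rw [hsum, add_eq_mul_one_add_sq hts, mul_pow, ← pow_mul, hj, Nat.add_sub_cancel]
  linear_combination s ^ j * hvanish - t * (1 + t) ^ (2 * j) * hts_pow
    - t * (1 + t) ^ (2 * j) * CharTwo.two_eq_zero (R := R)

theorem span_one_add_sq_pow_eq_bot (ht : t ^ (2 * 2 ^ m) = 1) :
    Ideal.span {(1 + t) ^ 2} ^ 2 ^ m = ⊥ := by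
  rw [Ideal.span_singleton_pow, ← pow_mul, one_add_pow_eq_zero ht, Ideal.span_singleton_eq_bot]

end CharTwoRing

instance MonoidAlgebra.charP {k G : Type*} [CommRing k] [Monoid G] (p : ℕ) [CharP k p] :
    CharP (MonoidAlgebra k G) p :=
  charP_of_injective_algebraMap' k p

theorem single_mul_single_inv {k G : Type*} [Semiring k] [Group G] (g : G) :
    single g (1 : k) * single g⁻¹ 1 = 1 := by
  rw [single_mul_single, mul_inv_cancel, mul_one, MonoidAlgebra.one_def]

theorem single_pow_orderOf {k G : Type*} [Semiring k] [Monoid G] (g : G) :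
    single g (1 : k) ^ orderOf g = 1 := by
  rw [single_pow, one_pow, pow_orderOf_eq_one, MonoidAlgebra.one_def]

theorem aug_single {k G : Type*} [Field k] [Group G] (g : G) (c : k) : aug k G (single g c) = c := by
  simp [aug]

theorem jacobson_bot_le_ker {k B : Type*} [Field k] [CommRing B] [Algebra k B] (φ : B →ₐ[k] k) :
    (⊥ : Ideal B).jacobson ≤ RingHom.ker φ := by
  have hsurj : Function.Surjective φ := fun c => ⟨algebraMap k B c, φ.commutes c⟩
  exact sInf_le ⟨bot_le, RingHom.ker_isMaximal_of_surjective (φ : B →+* k) hsurj⟩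

theorem mem_jacRad_of_isNilpotent {k A : Type*} [Field k] [CommRing A] [Algebra k A] {x : A}
    (hx : IsNilpotent x) : x ∈ jacRad k A :=
  Ideal.radical_le_jacobson (Ideal.zero_eq_bot (R := A) ▸ mem_nilradical.mpr hx)

section InvFixed

variable (k : Type*) [CommSemiring k] (G : Type*) [CommGroup G]

noncomputable def invFixed : Subalgebra k (MonoidAlgebra k G) :=
  AlgHom.equalizer (MonoidAlgebra.domCongr k k (MulEquiv.inv G)).toAlgHom
    (AlgHom.id k (MonoidAlgebra k G))

def invOrbitSums : Set (MonoidAlgebra k G) :=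
  {f | ∃ g : G, g⁻¹ = g ∧ f = single g 1} ∪ Set.range fun g : G => single g 1 + single g⁻¹ 1

variable {k G}

theorem mem_invFixed_iff {f : MonoidAlgebra k G} :
    f ∈ invFixed k G ↔ ∀ x, f.coeff x⁻¹ = f.coeff x := by
  rw [invFixed, AlgHom.mem_equalizer, ← MonoidAlgebra.coeff_inj, Finsupp.ext_iff]
  simp

theorem single_mem_invFixed {g : G} (hg : g⁻¹ = g) : single g 1 ∈ invFixed k G := by
  simp [invFixed, AlgHom.mem_equalizer, hg]

theorem single_add_single_inv_mem_invFixed (g : G) : single g 1 + single g⁻¹ 1 ∈ invFixed k G := by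
  simp [invFixed, AlgHom.mem_equalizer, add_comm]

theorem coeff_erase_erase_inv (f : MonoidAlgebra k G) (g x : G) :
    ((f.erase g).erase g⁻¹).coeff x = if x = g ∨ x = g⁻¹ then 0 else f.coeff x := by
  simp only [MonoidAlgebra.coeff_erase, Finsupp.erase_apply]
  split_ifs <;> tauto

theorem card_support_erase_erase_inv_lt {f : MonoidAlgebra k G} {g : G}
    (hg : g ∈ f.coeff.support) :
    ((f.erase g).erase g⁻¹).coeff.support.card < f.coeff.support.card := by
  rw [MonoidAlgebra.coeff_erase, MonoidAlgebra.coeff_erase, Finsupp.support_erase,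
    Finsupp.support_erase]
  exact (card_le_card (erase_subset _ _)).trans_lt (card_erase_lt_of_mem hg)

theorem mem_span_invOrbitSums_of_coeff_inv {f : MonoidAlgebra k G}
    (hf : ∀ x, f.coeff x⁻¹ = f.coeff x) : f ∈ Submodule.span k (invOrbitSums k G) := by
  induction hN : f.coeff.support.card using Nat.strong_induction_on generalizing f with
  | _ N ih =>
  rcases f.coeff.support.eq_empty_or_nonempty with hempty | ⟨g, hg⟩
  · rw [Finsupp.support_eq_empty, MonoidAlgebra.coeff_eq_zero] at hempty
    exact hempty ▸ Submodule.zero_mem _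
  set f' := (f.erase g).erase g⁻¹
  have hcoeff : ∀ x, f'.coeff x = if x = g ∨ x = g⁻¹ then 0 else f.coeff x :=
    coeff_erase_erase_inv f g
  have hf' : ∀ x, f'.coeff x⁻¹ = f'.coeff x := by
    intro x
    rw [hcoeff, hcoeff, inv_eq_iff_eq_inv, inv_inj, hf]
    simp only [or_comm]
  have hmem := ih _ (hN ▸ card_support_erase_erase_inv_lt hg) hf' rfl
  by_cases hgg : g⁻¹ = g
  · have hdecomp : f = f' + f.coeff g • single g 1 := by
      ext x
      rcases eq_or_ne x g with rfl | hxg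
      · simp [hcoeff]
      · simp [hcoeff, hgg, hxg]
    rw [hdecomp]
    exact add_mem hmem (Submodule.smul_mem _ _ (Submodule.subset_span (Or.inl ⟨g, hgg, rfl⟩)))
  · have hdecomp : f = f' + f.coeff g • (single g 1 + single g⁻¹ 1) := by
      ext x
      rcases eq_or_ne x g with rfl | hxg
      · simp [hcoeff, Ne.symm hgg]
      rcases eq_or_ne x g⁻¹ with rfl | hxg'
      · simp [hcoeff, hgg, hf]
      · simp [hcoeff, hxg, hxg']
    rw [hdecomp]
    exact add_mem hmem (Submodule.smul_mem _ _ (Submodule.subset_span (Or.inr ⟨g, rfl⟩)))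

variable (k G) in
theorem toSubmodule_invFixed :
    Subalgebra.toSubmodule (invFixed k G) = Submodule.span k (invOrbitSums k G) := by
  refine le_antisymm (fun f hf => mem_span_invOrbitSums_of_coeff_inv (mem_invFixed_iff.mp hf)) ?_
  rw [Submodule.span_le]
  rintro _ (⟨g, hg, rfl⟩ | ⟨g, rfl⟩)
  exacts [single_mem_invFixed hg, single_add_single_inv_mem_invFixed g]

end InvFixed

section Cyclic

variable {G : Type*} [CommGroup G] {a : G} {m : ℕ}

theorem exists_pow_eq_of_orderOf_eq (hgen : ∀ g : G, g ∈ Subgroup.zpowers a)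
    (hord : orderOf a = 2 * 2 ^ m) (g : G) : ∃ i < 2 * 2 ^ m, a ^ i = g := by
  have hfin : IsOfFinOrder a := orderOf_pos_iff.mp (by rw [hord]; positivity)
  obtain ⟨i, hi, hig⟩ := mem_image.mp (hfin.mem_zpowers_iff_mem_range_orderOf.mp (hgen g))
  exact ⟨i, hord ▸ mem_range.mp hi, hig⟩

theorem inv_pow_half_orderOf (hord : orderOf a = 2 * 2 ^ m) : (a ^ 2 ^ m)⁻¹ = a ^ 2 ^ m := by
  rw [inv_eq_iff_mul_eq_one, ← pow_add, ← two_mul, ← hord, pow_orderOf_eq_one]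

theorem eq_one_or_eq_pow_of_inv_eq (hgen : ∀ g : G, g ∈ Subgroup.zpowers a)
    (hord : orderOf a = 2 * 2 ^ m) {g : G} (hg : g⁻¹ = g) : g = 1 ∨ g = a ^ 2 ^ m := by
  obtain ⟨i, hi, rfl⟩ := exists_pow_eq_of_orderOf_eq hgen hord g
  have hdvd : 2 * 2 ^ m ∣ 2 * i := by
    rw [← hord]
    apply orderOf_dvd_of_pow_eq_one
    rw [two_mul, pow_add, ← inv_eq_iff_mul_eq_one, hg]
  obtain ⟨c, rfl⟩ := Nat.dvd_of_mul_dvd_mul_left two_pos hdvd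
  have hc : c < 2 := Nat.lt_of_mul_lt_mul_left (by rwa [mul_comm 2] at hi)
  interval_cases c <;> simp

theorem sum_single_pow_two_mul_add_one_ne_zero {k : Type*} [Semiring k] [Nontrivial k]
    (hord : orderOf a = 2 * 2 ^ m) :
    ∑ i ∈ range (2 ^ m), single (a ^ (2 * i + 1)) (1 : k) ≠ 0 := by
  intro h
  have hcoeff := congrArg (fun f : MonoidAlgebra k G => f.coeff a) h
  simp only [MonoidAlgebra.coeff_sum, Finset.sum_apply', MonoidAlgebra.coeff_single] at hcoeff
  rw [sum_eq_single 0] at hcoeff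
  · simp at hcoeff
  · intro i hi hi0
    have hne : a ^ (2 * i + 1) ≠ a := by
      rw [pow_succ, Ne, mul_eq_right]
      exact pow_ne_one_of_lt_orderOf (by omega) (by rw [hord]; have := mem_range.mp hi; omega)
    rw [Finsupp.single_apply, if_neg hne]
  · simp

theorem span_invOrbitSums_eq_of_cyclic {k : Type*} [CommSemiring k]
    (hgen : ∀ g : G, g ∈ Subgroup.zpowers a) (hord : orderOf a = 2 * 2 ^ m) :
    Submodule.span k (invOrbitSums k G) = Submodule.span k
      ({1, single (a ^ 2 ^ m) 1} ∪ {f | ∃ i : ℕ, 1 ≤ i ∧ i ≤ 2 * 2 ^ m - 1 ∧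
        f = single (a ^ i) 1 + single ((a ^ i)⁻¹) 1}) := by
  set S : Set (MonoidAlgebra k G) := {1, single (a ^ 2 ^ m) 1} ∪ {f | ∃ i : ℕ, 1 ≤ i ∧
    i ≤ 2 * 2 ^ m - 1 ∧ f = single (a ^ i) 1 + single ((a ^ i)⁻¹) 1}
  have hone : 1 ∈ Submodule.span k S := Submodule.subset_span (Or.inl (Set.mem_insert _ _))
  apply le_antisymm <;> rw [Submodule.span_le]
  · rintro _ (⟨g, hg, rfl⟩ | ⟨g, rfl⟩)
    · rcases eq_one_or_eq_pow_of_inv_eq hgen hord hg with rfl | rfl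
      · exact hone
      · exact Submodule.subset_span (Or.inl (Set.mem_insert_of_mem _ rfl))
    · obtain ⟨i, hi, rfl⟩ := exists_pow_eq_of_orderOf_eq hgen hord g
      rcases Nat.eq_zero_or_pos i with rfl | hi0
      · simpa [← MonoidAlgebra.one_def] using add_mem hone hone
      · exact Submodule.subset_span (Or.inr ⟨i, hi0, by omega, rfl⟩)
  · rintro _ ((rfl | rfl) | ⟨i, -, -, rfl⟩)
    · exact Submodule.subset_span (Or.inl ⟨1, inv_one, MonoidAlgebra.one_def⟩)
    · exact Submodule.subset_span (Or.inl ⟨_, inv_pow_half_orderOf hord, rfl⟩)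
    · exact Submodule.subset_span (Or.inr ⟨a ^ i, rfl⟩)

end Cyclic

section Radical

variable {k : Type*} [Field k] [CharP k 2] {G : Type*} [CommGroup G] {a : G} {m : ℕ}

theorem sub_algebraMap_aug_mem_span (hgen : ∀ g : G, g ∈ Subgroup.zpowers a)
    (hord : orderOf a = 2 * 2 ^ m) (hm : 1 ≤ m) {f : MonoidAlgebra k G} (hf : f ∈ invFixed k G) :
    f - algebraMap k _ (aug k G f) ∈ Ideal.span {(1 + single a (1 : k)) ^ 2} := by
  have hts := single_mul_single_inv (k := k) a
  have hpow (g : G) (i : ℕ) : single (g ^ i) (1 : k) = single g 1 ^ i := by rw [single_pow, one_pow]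
  suffices Submodule.span k (invOrbitSums k G) ≤
      ((Ideal.span {(1 + single a (1 : k)) ^ 2}).restrictScalars k).comap
        (LinearMap.id - Algebra.linearMap k _ ∘ₗ (aug k G).toLinearMap) from
    this (toSubmodule_invFixed k G ▸ hf)
  rw [Submodule.span_le]
  rintro _ (⟨g, hg, rfl⟩ | ⟨g, rfl⟩) <;>
    simp only [SetLike.mem_coe, Submodule.mem_comap, Submodule.restrictScalars_mem,
      LinearMap.sub_apply, LinearMap.id_apply, LinearMap.comp_apply, AlgHom.toLinearMap_apply,
      Algebra.linearMap_apply, Ideal.mem_span_singleton]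
  · rcases eq_one_or_eq_pow_of_inv_eq hgen hord hg with rfl | rfl
    · simp [aug_single, MonoidAlgebra.one_def]
    · have hl : 2 ≤ 2 ^ m := by simpa using Nat.pow_le_pow_right two_pos hm
      have hfrob : (1 + single a (1 : k)) ^ 2 ^ m = single a 1 ^ 2 ^ m - 1 := by
        rw [add_pow_char_pow, one_pow, CharTwo.sub_eq_add, add_comm]
      rw [aug_single, map_one, hpow, ← hfrob]
      exact pow_dvd_pow _ hl
  · obtain ⟨i, -, rfl⟩ := exists_pow_eq_of_orderOf_eq hgen hord g
    rw [map_add, aug_single, aug_single, CharTwo.add_self_eq_zero, map_zero, sub_zero, hpow,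
      ← inv_pow, hpow]
    exact one_add_sq_dvd_pow_add_pow hts i

theorem jacobson_bot_le_comap (hgen : ∀ g : G, g ∈ Subgroup.zpowers a)
    (hord : orderOf a = 2 * 2 ^ m) (hm : 1 ≤ m) :
    (⊥ : Ideal (invFixed k G)).jacobson ≤
      (Ideal.span {(1 + single a (1 : k)) ^ 2}).comap (invFixed k G).val := by
  intro y hy
  have haug : aug k G y = 0 := jacobson_bot_le_ker ((aug k G).comp (invFixed k G).val) hy
  simpa [haug] using sub_algebraMap_aug_mem_span hgen hord hm y.2

theorem jacRad_invFixed_pow_eq_bot (hgen : ∀ g : G, g ∈ Subgroup.zpowers a)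
    (hord : orderOf a = 2 * 2 ^ m) (hm : 1 ≤ m) : jacRad k (invFixed k G) ^ 2 ^ m = ⊥ := by
  have ht : single a (1 : k) ^ (2 * 2 ^ m) = 1 := hord ▸ single_pow_orderOf a
  have hJ : (⊥ : Ideal (invFixed k G)).jacobson ^ 2 ^ m = ⊥ := by
    refine eq_bot_iff.mpr ((Ideal.pow_right_mono (jacobson_bot_le_comap hgen hord hm) _).trans ?_)
    calc _ ≤ (Ideal.span {(1 + single a (1 : k)) ^ 2} ^ 2 ^ m).comap (invFixed k G).val :=
          Ideal.le_comap_pow _ _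
      _ = ⊥ := by
        rw [span_one_add_sq_pow_eq_bot ht, Ideal.comap_bot_of_injective _ Subtype.val_injective]
  rw [jacRad, ← Submodule.restrictScalars_pow (by positivity), hJ, Submodule.restrictScalars_bot]

theorem single_add_single_inv_pow_eq_zero (hord : orderOf a = 2 * 2 ^ m) :
    (single a (1 : k) + single a⁻¹ 1) ^ 2 ^ m = 0 :=
  add_pow_eq_zero (single_mul_single_inv a) (hord ▸ single_pow_orderOf a)

theorem single_add_single_inv_pow_pred (hord : orderOf a = 2 * 2 ^ m) (hm : 1 ≤ m) :
    (single a (1 : k) + single a⁻¹ 1) ^ (2 ^ m - 1) =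
      ∑ i ∈ range (2 ^ m), single (a ^ (2 * i + 1)) (1 : k) := by
  rw [add_pow_pred_eq_sum (single_mul_single_inv a) (hord ▸ single_pow_orderOf a) hm]
  simp only [single_pow, one_pow]

end Radical

theorem stmt_18 (n : ℕ) (hn : 3 ≤ n) (k : Type*) [Field k] [CharP k 2]
    (G : Type*) [CommGroup G] (a : G) (hgen : ∀ g : G, g ∈ Subgroup.zpowers a)
    (hord : orderOf a = 2 ^ (n - 1)) :
    let Λ := AlgHom.equalizer
      (MonoidAlgebra.domCongr k k (MulEquiv.inv G)).toAlgHom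
      (AlgHom.id k (MonoidAlgebra k G))
    Subalgebra.toSubmodule Λ = Submodule.span k
      ({1, MonoidAlgebra.single (a ^ (2 ^ (n - 2))) (1 : k)} ∪
        {f | ∃ i : ℕ, 1 ≤ i ∧ i ≤ 2 * 2 ^ (n - 2) - 1 ∧
          f = MonoidAlgebra.single (a ^ i) (1 : k) +
              MonoidAlgebra.single ((a ^ i)⁻¹) (1 : k)}) ∧
    jacRad k Λ ^ (2 ^ (n - 2)) = ⊥ ∧
    ∃ z : Λ, (z : MonoidAlgebra k G) =
        ∑ i ∈ Finset.range (2 ^ (n - 2)), MonoidAlgebra.single (a ^ (2 * i + 1)) (1 : k) ∧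
      z ∈ jacRad k Λ ^ (2 ^ (n - 2) - 1) ∧ z ≠ 0 := by
  intro Λ
  have hm : 1 ≤ n - 2 := by omega
  have hord' : orderOf a = 2 * 2 ^ (n - 2) := by rw [hord, ← pow_succ']; congr 1; omega
  let η : Λ := ⟨single a 1 + single a⁻¹ 1, single_add_single_inv_mem_invFixed a⟩
  have hη : ((η ^ (2 ^ (n - 2) - 1) : Λ) : MonoidAlgebra k G) =
      ∑ i ∈ range (2 ^ (n - 2)), single (a ^ (2 * i + 1)) (1 : k) :=
    single_add_single_inv_pow_pred hord' hm
  refine ⟨(toSubmodule_invFixed k G).trans (span_invOrbitSums_eq_of_cyclic hgen hord'),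
    jacRad_invFixed_pow_eq_bot hgen hord' hm, η ^ (2 ^ (n - 2) - 1), hη, ?_, ?_⟩
  · have hηnil : IsNilpotent η := ⟨_, Subtype.ext (single_add_single_inv_pow_eq_zero hord')⟩
    exact Submodule.pow_mem_pow _ (mem_jacRad_of_isNilpotent hηnil) _
  · intro h
    exact sum_single_pow_two_mul_add_one_ne_zero hord' (by rw [← hη, h]; rfl)
end
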